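/- arXiv:2102.01423 — 2 statements merged into one kernel-verified Lean document; each statement's English description precedes it below -/
import Mathlib

section
/- Let n : ℝ → ℝ³ and d : ℝ → ℝ be differentiable functions with d(t) ≠ 0 for all t, and let v, ω : ℝ → ℝ³ be the camera translational and angular velocities. Suppose the plane kinematics in the camera frame satisfy n′(t) = −ω(t) × n(t) and d′(t) = ⟨n(t), v(t)⟩. Define χ(t) = −n(t)/d(t). Then χ satisfies the differential equation χ′(t) = ⟨χ(t), v(t)⟩ · χ(t) − ω(t) × χ(t) (equivalently, χ′ = χ χᵀ v − [ω]_× χ). -/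
/-! Write `χ = s • n` with `s = -1/d`. Then `s' = d'/d² = ⟨n, v⟩/d²`, so the product rule gives
`χ' = (⟨n, v⟩/d²) • n + s • n'`. The first term is `⟨χ, v⟩ • χ` because `χ` is quadratic in `s`,
and the second is `-ω × χ` because `n ↦ ω × n` is linear. -/

open Matrix

theorem HasDerivAt.neg_one_div_smul {E : Type*} [NormedAddCommGroup E] [NormedSpace ℝ E]
    {n : ℝ → E} {d : ℝ → ℝ} {n' : E} {d' t : ℝ} (hn : HasDerivAt n n' t)
    (hdd : HasDerivAt d d' t) (hd : d t ≠ 0) :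
    HasDerivAt (fun s => -(1 / d s) • n s) (-(1 / d t) • n' + (d' / d t ^ 2) • n t) t := by
  have hs : HasDerivAt (fun s => -(1 / d s)) (d' / d t ^ 2) t := by
    have h := (hdd.inv hd).neg
    rw [neg_div, neg_neg] at h
    simp only [one_div]
    exact h
  exact hs.smul hn

theorem dotProduct_smul_smul_self {R m : Type*} [CommRing R] [Fintype m] (c : R) (n v : m → R) :
    ((c • n) ⬝ᵥ v) • (c • n) = (c ^ 2 * (n ⬝ᵥ v)) • n := by
  rw [smul_dotProduct, smul_smul, smul_eq_mul]
  ring_nf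

theorem hasDerivAt_neg_one_div_smul_of_linear {m : Type*} [Fintype m]
    {n : ℝ → m → ℝ} {d : ℝ → ℝ} {v : m → ℝ} {L : (m → ℝ) →ₗ[ℝ] m → ℝ} {t : ℝ}
    (hd : d t ≠ 0) (hn : HasDerivAt n (-L (n t)) t) (hdd : HasDerivAt d (n t ⬝ᵥ v) t) :
    HasDerivAt (fun s => -(1 / d s) • n s)
      (((-(1 / d t) • n t) ⬝ᵥ v) • (-(1 / d t) • n t) - L (-(1 / d t) • n t)) t := by
  refine (hn.neg_one_div_smul hdd hd).congr_deriv ?_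
  rw [dotProduct_smul_smul_self, map_smul, smul_neg, neg_add_eq_sub]
  congr 2
  field_simp

theorem stmt8 (n v ω : ℝ → Fin 3 → ℝ) (d : ℝ → ℝ)
    (hd : ∀ t, d t ≠ 0)
    (hn : ∀ t, HasDerivAt n (-(crossProduct (ω t) (n t))) t)
    (hdd : ∀ t, HasDerivAt d (n t ⬝ᵥ v t) t)
    (χ : ℝ → Fin 3 → ℝ) (hχ : χ = fun t => -(1 / d t) • n t) :
    ∀ t, HasDerivAt χ ((χ t ⬝ᵥ v t) • χ t - crossProduct (ω t) (χ t)) t := by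
  subst hχ
  exact fun t => hasDerivAt_neg_one_div_smul_of_linear (hd t) (hn t) (hdd t)
end

section
/- Let C, ΔC ∈ ℝ^{p×n}, A ∈ ℝ^{n×n}, B ∈ ℝ^{n×p}, and x ∈ ℝⁿ, and suppose the p×p matrix (C + ΔC)·B is invertible. Define the control input u = −((C + ΔC)·B)⁻¹ · ΔC · A · x. Then (C + ΔC)·(A·x + B·u) = C·A·x. In particular, for any set E ⊆ ℝᵖ and any c_r ∈ ℝᵖ, if C·A·x − c_r ∈ E then (C + ΔC)·(A·x + B·u) − c_r ∈ E. -/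
open Matrix

section

variable {R m n : Type*} [CommRing R] [Fintype m] [DecidableEq m] [Fintype n]

theorem mulVec_mulVec_inv_mul_mulVec (M : Matrix m n R) (B : Matrix n m R)
    [Invertible (M * B)] (v : m → R) :
    M *ᵥ (B *ᵥ ((M * B)⁻¹ *ᵥ v)) = v := by
  rw [mulVec_mulVec, mulVec_mulVec, mul_inv_of_invertible, one_mulVec]

theorem add_mulVec_add_mulVec_neg_inv_mul_mulVec (C ΔC : Matrix m n R) (B : Matrix n m R)
    [Invertible ((C + ΔC) * B)] (y : n → R) :
    (C + ΔC) *ᵥ (y + B *ᵥ -(((C + ΔC) * B)⁻¹ *ᵥ (ΔC *ᵥ y))) = C *ᵥ y := by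
  rw [mulVec_add, mulVec_neg, mulVec_neg, mulVec_mulVec_inv_mul_mulVec, add_mulVec]
  abel

end

theorem stmt12 {p n : ℕ} (C ΔC : Matrix (Fin p) (Fin n) ℝ)
    (A : Matrix (Fin n) (Fin n) ℝ) (B : Matrix (Fin n) (Fin p) ℝ)
    (x : Fin n → ℝ) [Invertible ((C + ΔC) * B)]
    (u : Fin p → ℝ) (hu : u = -(((C + ΔC) * B)⁻¹ *ᵥ (ΔC *ᵥ (A *ᵥ x)))) :
    (C + ΔC) *ᵥ (A *ᵥ x + B *ᵥ u) = C *ᵥ (A *ᵥ x) ∧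
    ∀ (E : Set (Fin p → ℝ)) (cr : Fin p → ℝ),
      C *ᵥ (A *ᵥ x) - cr ∈ E → (C + ΔC) *ᵥ (A *ᵥ x + B *ᵥ u) - cr ∈ E := by
  rw [hu, add_mulVec_add_mulVec_neg_inv_mul_mulVec]
  exact ⟨rfl, fun _ _ => id⟩
end
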